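/- arXiv:2508.02572 — 5 statements merged into one kernel-verified Lean document; each statement's English description precedes it below -/
import Mathlib

section
/- For the facility location with fair outliers LP, the integrality gap is unbounded: for every M ≥ 2 and every f > 0, there is an instance with one facility of opening cost f and M co-located clients (all distances zero) with outlier budget ℓ = M - 1, such that the LP optimum is at most f/M while every feasible integral solution has cost at least f. Hence the ratio of integral optimum to LP optimum is at least M. -/
/-!
Spreading the facility fractionally as `y = 1/M`, every client is served to the extent `1/M`
and left out to the extent `1 - 1/M`, which uses up exactly the outlier budget `M - 1` at cost
`f/M`. An integral solution cannot do this: with the facility closed every client is an outlier,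
so the `M` outliers exceed the budget, and the facility must be opened at cost `f`.
-/

open Finset

lemma card_le_sum_of_forall_le_zero {ι : Type*} [Fintype ι] {x z : ι → ℝ}
    (hcover : ∀ j, 1 ≤ x j + z j) (hx : ∀ j, x j ≤ 0) : (Fintype.card ι : ℝ) ≤ ∑ j, z j := by
  simpa using card_nsmul_le_sum univ z 1 fun j _ => by linarith [hcover j, hx j]

lemma eq_one_of_integral_feasible {ι : Type*} [Fintype ι] {x z : ι → ℝ} {y : ℝ}
    (hy : y = 0 ∨ y = 1) (hcover : ∀ j, 1 ≤ x j + z j) (hxy : ∀ j, x j ≤ y)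
    (hbudget : ∑ j, z j ≤ (Fintype.card ι : ℝ) - 1) : y = 1 := by
  refine hy.resolve_left fun hy0 => ?_
  have := card_le_sum_of_forall_le_zero hcover fun j => hy0 ▸ hxy j
  linarith

lemma exists_fractional_solution (M : ℕ) (f : ℝ) (hM : 1 ≤ M) :
    ∃ (x z : Fin M → ℝ) (y : ℝ),
      (∀ j, 0 ≤ x j ∧ x j ≤ 1) ∧ (∀ j, 0 ≤ z j ∧ z j ≤ 1) ∧ (0 ≤ y ∧ y ≤ 1) ∧
      (∀ j, 1 ≤ x j + z j) ∧ (∀ j, x j ≤ y) ∧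
      (∑ j, z j ≤ (M : ℝ) - 1) ∧
      f * y + ∑ j, (0 : ℝ) * x j ≤ f / M := by
  have hM0 : (M : ℝ) ≠ 0 := by positivity
  have ht0 : 0 ≤ (M : ℝ)⁻¹ := by positivity
  have ht1 : (M : ℝ)⁻¹ ≤ 1 := inv_le_one_of_one_le₀ (by exact_mod_cast hM)
  refine ⟨fun _ => (M : ℝ)⁻¹, fun _ => 1 - (M : ℝ)⁻¹, (M : ℝ)⁻¹,
    fun _ => ⟨ht0, ht1⟩, fun _ => ⟨by linarith, by linarith⟩, ⟨ht0, ht1⟩,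
    fun _ => by simp, fun _ => le_rfl, ?_, by simp [div_eq_mul_inv]⟩
  simp [hM0]

theorem integrality_gap_unbounded_general (M : ℕ) (f : ℝ) (hM : 2 ≤ M) :
    (∃ (x z : Fin M → ℝ) (y : ℝ),
      (∀ j, 0 ≤ x j ∧ x j ≤ 1) ∧ (∀ j, 0 ≤ z j ∧ z j ≤ 1) ∧ (0 ≤ y ∧ y ≤ 1) ∧
      (∀ j, 1 ≤ x j + z j) ∧ (∀ j, x j ≤ y) ∧
      (∑ j, z j ≤ (M : ℝ) - 1) ∧
      f * y + ∑ j, (0 : ℝ) * x j ≤ f / M) ∧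
    (∀ (x z : Fin M → ℝ) (y : ℝ),
      (∀ j, x j = 0 ∨ x j = 1) → (∀ j, z j = 0 ∨ z j = 1) → (y = 0 ∨ y = 1) →
      (∀ j, 1 ≤ x j + z j) → (∀ j, x j ≤ y) →
      (∑ j, z j ≤ (M : ℝ) - 1) →
      f ≤ f * y + ∑ j, (0 : ℝ) * x j) ∧
    f ≤ (M : ℝ) * (f / M) := by
  have hM0 : (M : ℝ) ≠ 0 := by positivity
  refine ⟨exists_fractional_solution M f (by omega),
    fun x z y _ _ hy hcover hxy hbudget => ?_, (mul_div_cancel₀ f hM0).ge⟩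
  obtain rfl := eq_one_of_integral_feasible hy hcover hxy (by simpa using hbudget)
  simp

/-- Unbounded integrality gap of the fair-outliers facility location LP:
one facility of cost `f`, `M` co-located clients (all distances `0`),
outlier budget `M - 1`, a single group.  The LP has a feasible solution of
cost at most `f / M`, while every feasible integral solution has cost at
least `f`; hence the gap is at least `M`. -/
theorem integrality_gap_unbounded (M : ℕ) (f : ℝ) (hM : 2 ≤ M) (hf : 0 < f) :
    (∃ (x z : Fin M → ℝ) (y : ℝ),
      (∀ j, 0 ≤ x j ∧ x j ≤ 1) ∧ (∀ j, 0 ≤ z j ∧ z j ≤ 1) ∧ (0 ≤ y ∧ y ≤ 1) ∧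
      (∀ j, 1 ≤ x j + z j) ∧ (∀ j, x j ≤ y) ∧
      (∑ j, z j ≤ (M : ℝ) - 1) ∧
      f * y + ∑ j, (0 : ℝ) * x j ≤ f / M) ∧
    (∀ (x z : Fin M → ℝ) (y : ℝ),
      (∀ j, x j = 0 ∨ x j = 1) → (∀ j, z j = 0 ∨ z j = 1) → (y = 0 ∨ y = 1) →
      (∀ j, 1 ≤ x j + z j) → (∀ j, x j ≤ y) →
      (∑ j, z j ≤ (M : ℝ) - 1) →
      f ≤ f * y + ∑ j, (0 : ℝ) * x j) ∧
    f ≤ (M : ℝ) * (f / M) :=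
  integrality_gap_unbounded_general M f hM
end

section
/- Any optimal solution to k-median with fair outliers, with cost O_C and at most ℓ_g outliers per group g, is a feasible solution to the corresponding k-median with penalties instance (penalties p_j = O_C/(γ·ℓ_g) for j ∈ C_g) of cost at most O_C·(1 + ω/γ). Hence the penalty-instance optimum satisfies O_P ≤ O_C·(1 + ω/γ). -/
open Finset

theorem sum_div_le_of_card_le {C : Type*} (s : Finset C) {c ℓ : ℝ} (hℓ : 0 < ℓ) (hc : 0 ≤ c)
    (hs : (#s : ℝ) ≤ ℓ) : ∑ _j ∈ s, c / ℓ ≤ c := by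
  rw [sum_const, nsmul_eq_mul]
  calc (#s : ℝ) * (c / ℓ) ≤ ℓ * (c / ℓ) := by gcongr
    _ = c := mul_div_cancel₀ c hℓ.ne'

theorem sum_div_group_quota_le {C G : Type*} [Fintype G] [DecidableEq G] (grp : C → G)
    (ℓ : G → ℝ) (hℓ : ∀ g, 0 < ℓ g) {c : ℝ} (hc : 0 ≤ c) (O : Finset C)
    (hquota : ∀ g, (#(O.filter (grp · = g)) : ℝ) ≤ ℓ g) :
    ∑ j ∈ O, c / ℓ (grp j) ≤ Fintype.card G * c := by
  rw [← sum_fiberwise O grp]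
  calc ∑ g, ∑ j ∈ O.filter (grp · = g), c / ℓ (grp j)
      = ∑ g, ∑ _j ∈ O.filter (grp · = g), c / ℓ g :=
        sum_congr rfl fun g _ => sum_congr rfl fun j hj => by rw [(mem_filter.mp hj).2]
    _ ≤ ∑ _g : G, c := sum_le_sum fun g _ => sum_div_le_of_card_le _ (hℓ g) hc (hquota g)
    _ = Fintype.card G * c := by rw [sum_const, card_univ, nsmul_eq_mul]

theorem fair_solution_feasible_for_penalties_general
    {F C : Type*} [Fintype C] [DecidableEq C] (ω k : ℕ)
    (dist : F → C → ℝ)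
    (grp : C → Fin ω) (ℓ : Fin ω → ℝ) (hℓ : ∀ g, 0 < ℓ g)
    (γ OC OP : ℝ) (hγ : 0 < γ) (hOC : 0 ≤ OC)
    (p : C → ℝ) (hp : ∀ j, p j = OC / (γ * ℓ (grp j)))
    (S : Finset F) (hSne : S.Nonempty) (hSk : S.card ≤ k)
    (O : Finset C)
    (hfair : ∀ g, ((O.filter (fun j => grp j = g)).card : ℝ) ≤ ℓ g)
    (hcost : OC = ∑ j ∈ Oᶜ, S.inf' hSne (fun i => dist i j))
    (hOP : ∀ (S' : Finset F) (hS' : S'.Nonempty), S'.card ≤ k →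
      ∀ O' : Finset C,
        OP ≤ (∑ j ∈ O'ᶜ, S'.inf' hS' (fun i => dist i j)) + ∑ j ∈ O', p j) :
    ((∑ j ∈ Oᶜ, S.inf' hSne (fun i => dist i j)) + ∑ j ∈ O, p j
        ≤ OC * (1 + ω / γ)) ∧
    OP ≤ OC * (1 + ω / γ) := by
  have hpenalty : ∑ j ∈ O, p j ≤ ω * (OC / γ) := by
    simp_rw [hp, ← div_div]
    simpa using sum_div_group_quota_le grp ℓ hℓ (div_nonneg hOC hγ.le) O hfair
  have hfeasible : (∑ j ∈ Oᶜ, S.inf' hSne (fun i => dist i j)) + ∑ j ∈ O, p j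
      ≤ OC * (1 + ω / γ) := by
    rw [← hcost]
    linarith [show OC * (1 + ω / γ) = OC + ω * (OC / γ) by ring]
  exact ⟨hfeasible, (hOP S hSne hSk O).trans hfeasible⟩

/-- The optimal fair solution `(S, O)` (at most `k` facilities, at most `ℓ g`
outliers per group, connection cost `OC`) is feasible for the penalty instance
with penalties `p j = OC / (γ * ℓ (grp j))`, and its penalty-instance cost is
at most `OC * (1 + ω / γ)`; hence the penalty optimum `OP` is at most
`OC * (1 + ω / γ)`. -/
theorem fair_solution_feasible_for_penalties
    {F C : Type*} [Fintype C] [DecidableEq C] (ω k : ℕ)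
    (dist : F → C → ℝ) (hd : ∀ i j, 0 ≤ dist i j)
    (grp : C → Fin ω) (ℓ : Fin ω → ℝ) (hℓ : ∀ g, 0 < ℓ g)
    (γ OC OP : ℝ) (hγ : 0 < γ) (hOC : 0 ≤ OC)
    (p : C → ℝ) (hp : ∀ j, p j = OC / (γ * ℓ (grp j)))
    (S : Finset F) (hSne : S.Nonempty) (hSk : S.card ≤ k)
    (O : Finset C)
    (hfair : ∀ g, ((O.filter (fun j => grp j = g)).card : ℝ) ≤ ℓ g)
    (hcost : OC = ∑ j ∈ Oᶜ, S.inf' hSne (fun i => dist i j))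
    (hOP : ∀ (S' : Finset F) (hS' : S'.Nonempty), S'.card ≤ k →
      ∀ O' : Finset C,
        OP ≤ (∑ j ∈ O'ᶜ, S'.inf' hS' (fun i => dist i j)) + ∑ j ∈ O', p j) :
    ((∑ j ∈ Oᶜ, S.inf' hSne (fun i => dist i j)) + ∑ j ∈ O, p j
        ≤ OC * (1 + ω / γ)) ∧
    OP ≤ OC * (1 + ω / γ) :=
  fair_solution_feasible_for_penalties_general ω k dist grp ℓ hℓ γ OC OP hγ hOC p hp S hSne hSk O
    hfair hcost hOP
end

section
/- Let V be a finite set of d-dimensional nonnegative integer vectors with all entries less than L, let T be a target with all entries less than L, and fix k' ≤ |V|. Define V' by mapping each v ∈ V to v' = (v_1, …, v_d, L - v_1, …, L - v_d), and T' = (t_1, …, t_d, k'L - t_1, …, k'L - t_d). Then there exists U ⊆ V with |U| = k' and ∑_{v ∈ U} v = T if and only if there exists U' ⊆ V' with |U'| ≤ k' and ∑_{v' ∈ U'} v'_j ≥ T'_j for all j = 1, …, 2d, provided L > k'·max_j t_j. -/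
/-!
Write `v' = (v, L - v)` and `S = ∑_{v ∈ U} v`. For `U ⊆ V` the doubled vectors of `U` sum to
`(S, |U| L - S)`, so the lower bounds `T'` say `T ≤ S` and `k' L - T ≤ |U| L - S`. Adding them
coordinate-wise gives `(k' - |U|) L ≤ T - S ≤ 0`; with `|U| ≤ k'` and `L > 0` this forces
`|U| = k'`, and then `S = T`.
-/

open Finset

theorem Finset.exists_subset_image_iff {α β : Type*} [DecidableEq β] {f : α → β}
    {s : Finset α} {p : Finset β → Prop} :
    (∃ t ⊆ s.image f, p t) ↔ ∃ t ⊆ s, p (t.image f) := by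
  constructor
  · rintro ⟨t, ht, hp⟩
    obtain ⟨t', ht', rfl⟩ := subset_image_iff.mp ht
    exact ⟨t', ht', hp⟩
  · rintro ⟨t, ht, hp⟩
    exact ⟨t.image f, image_subset_image ht, hp⟩

section Doubling

variable {ι : Type*}

def doubleCoords (L : ℕ) (v : ι → ℕ) : ι ⊕ ι → ℤ :=
  Sum.elim (fun j => (v j : ℤ)) (fun j => (L : ℤ) - v j)

theorem doubleCoords_injective (L : ℕ) : Function.Injective (doubleCoords (ι := ι) L) :=
  fun v w h => funext fun j => by simpa [doubleCoords] using congrFun h (Sum.inl j)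

theorem sum_doubleCoords_inl (L : ℕ) (U : Finset (ι → ℕ)) (j : ι) :
    ∑ v ∈ U, doubleCoords L v (Sum.inl j) = ∑ v ∈ U, (v j : ℤ) := rfl

theorem sum_doubleCoords_inr (L : ℕ) (U : Finset (ι → ℕ)) (j : ι) :
    ∑ v ∈ U, doubleCoords L v (Sum.inr j) = U.card * L - ∑ v ∈ U, (v j : ℤ) := by
  simp [doubleCoords, sum_sub_distrib]

theorem eq_and_eq_of_le_of_sub_le {R : Type*} [CommRing R] [LinearOrder R]
    [IsStrictOrderedRing R] {n k L s t : R} (hL : 0 < L) (hn : n ≤ k) (hlo : t ≤ s)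
    (hhi : k * L - t ≤ n * L - s) : n = k ∧ s = t := by
  have hnk : n = k := le_antisymm hn (le_of_mul_le_mul_right (by linarith) hL)
  subst hnk
  exact ⟨rfl, by linarith⟩

theorem doubleCoords_bounds_iff [Nonempty ι] [DecidableEq (ι ⊕ ι → ℤ)] {L : ℕ}
    (hL : 0 < L) (k : ℕ) (T : ι → ℕ) (U : Finset (ι → ℕ)) :
    ((U.image (doubleCoords L)).card ≤ k ∧
      ∀ j, Sum.elim (fun j => (T j : ℤ)) (fun j => (k : ℤ) * L - T j) j ≤
        ∑ w ∈ U.image (doubleCoords L), w j) ↔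
    U.card = k ∧ ∀ j, ∑ v ∈ U, v j = T j := by
  simp only [card_image_of_injective _ (doubleCoords_injective L),
    sum_image fun v _ w _ h => doubleCoords_injective L h, Sum.forall, Sum.elim_inl,
    Sum.elim_inr, sum_doubleCoords_inl, sum_doubleCoords_inr]
  constructor
  · rintro ⟨hcard, hlo, hhi⟩
    have key : ∀ j, (U.card : ℤ) = k ∧ ∑ v ∈ U, (v j : ℤ) = T j := fun j =>
      eq_and_eq_of_le_of_sub_le (L := (L : ℤ)) (by exact_mod_cast hL) (by exact_mod_cast hcard)
        (hlo j) (hhi j)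
    exact ⟨by exact_mod_cast (key (Classical.arbitrary ι)).1,
      fun j => by exact_mod_cast (key j).2⟩
  · rintro ⟨rfl, hsum⟩
    have hsum' : ∀ j, ∑ v ∈ U, (v j : ℤ) = T j := fun j => by exact_mod_cast hsum j
    simp [hsum']

end Doubling

theorem kmss_iff_kmss_ge_general
    {d : ℕ} (V : Finset (Fin d → ℕ)) (T : Fin d → ℕ) (L k' : ℕ)
    (hk' : k' ≤ V.card) (hL : ∀ j, k' * T j < L) :
    (∃ U ⊆ V, U.card = k' ∧ ∀ j, ∑ v ∈ U, v j = T j) ↔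
    (∃ U' ⊆ V.image (fun v : Fin d → ℕ =>
        (Sum.elim (fun j => (v j : ℤ)) (fun j => (L : ℤ) - v j) :
          Fin d ⊕ Fin d → ℤ)),
      U'.card ≤ k' ∧
      ∀ j : Fin d ⊕ Fin d,
        Sum.elim (fun j => (T j : ℤ)) (fun j => (k' : ℤ) * L - T j) j ≤
          ∑ w ∈ U', w j) := by
  rcases isEmpty_or_nonempty (Fin d) with _ | _
  · obtain ⟨U, hUV, hU⟩ := exists_subset_card_eq hk'
    exact iff_of_true ⟨U, hUV, hU, isEmptyElim⟩ ⟨∅, empty_subset _, by simp, isEmptyElim⟩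
  · have hL0 : 0 < L := (Nat.zero_le _).trans_lt (hL (Classical.arbitrary _))
    rw [Finset.exists_subset_image_iff]
    exact exists_congr fun U =>
      and_congr_right fun _ => (doubleCoords_bounds_iff hL0 k' T U).symm

/-- Reduction from kMSS (exactly `k'` vectors, exact sum) to kMSS≥
(at most `k'` vectors, coordinate-wise lower bounds), via the
coordinate-doubling construction. -/
theorem kmss_iff_kmss_ge
    {d : ℕ} (V : Finset (Fin d → ℕ)) (T : Fin d → ℕ) (L k' : ℕ)
    (hV : ∀ v ∈ V, ∀ j, v j < L) (hT : ∀ j, T j < L)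
    (hk' : k' ≤ V.card) (hL : ∀ j, k' * T j < L) :
    (∃ U ⊆ V, U.card = k' ∧ ∀ j, ∑ v ∈ U, v j = T j) ↔
    (∃ U' ⊆ V.image (fun v : Fin d → ℕ =>
        (Sum.elim (fun j => (v j : ℤ)) (fun j => (L : ℤ) - v j) :
          Fin d ⊕ Fin d → ℤ)),
      U'.card ≤ k' ∧
      ∀ j : Fin d ⊕ Fin d,
        Sum.elim (fun j => (T j : ℤ)) (fun j => (k' : ℤ) * L - T j) j ≤
          ∑ w ∈ U', w j) :=
  kmss_iff_kmss_ge_general V T L k' hk' hL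
end

section
/- Consider the facility location with fair outliers instance built from a kMSS_≥ instance (V, T, k): for each vector v ∈ V create a facility with opening cost 1, and for each coordinate g ∈ {1,…,d}, co-locate v_g clients of group g at that facility; distinct facilities are at pairwise distance greater than k. Then there is a feasible solution of total cost at most k serving at least t_g clients of each group g if and only if (V, T, k) is a yes-instance of kMSS_≥. -/
/-! Since `D > k`, a solution of cost at most `k` cannot afford a single client served away from
its own facility, so every served client of group `g` sits at an open facility and there are at
most `∑ v ∈ S, v g` of them. Conversely, opening the facilities of `U` and serving all their
co-located clients costs exactly `#U`. -/

open Finset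

theorem Finset.forall_of_sum_ite_zero_lt {ι M : Type*} [AddCommMonoid M] [PartialOrder M]
    [IsOrderedAddMonoid M] {P : ι → Prop} [DecidablePred P] {s : Finset ι} {D : M}
    (hD : 0 ≤ D) (h : ∑ c ∈ s, (if P c then 0 else D) < D) : ∀ c ∈ s, P c := by
  intro c hc
  by_contra hPc
  have hle := single_le_sum (f := fun c => if P c then 0 else D)
    (fun c _ => by split_ifs <;> simp [hD]) hc
  simp only [hPc, if_false] at hle
  exact hle.not_gt h

section Clients

variable {ι : Type*} [Fintype ι] [DecidableEq ι]

/-- Client `(v, g, i)` is the `i`-th client of group `g` co-located with facility `v`. -/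
def groupClients (S : Finset (ι → ℕ)) (g : ι) : Finset ((ι → ℕ) × ι × ℕ) :=
  S.biUnion fun v => (range (v g)).image fun i => (v, g, i)

theorem mem_groupClients {S : Finset (ι → ℕ)} {g : ι} {c : (ι → ℕ) × ι × ℕ} :
    c ∈ groupClients S g ↔ c.1 ∈ S ∧ c.2.1 = g ∧ c.2.2 < c.1 g := by
  obtain ⟨v, g', i⟩ := c
  simp only [groupClients, mem_biUnion, mem_image, mem_range, Prod.mk.injEq]
  constructor
  · rintro ⟨v, hv, i, hi, rfl, rfl, rfl⟩
    exact ⟨hv, rfl, hi⟩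
  · rintro ⟨hv, rfl, hi⟩
    exact ⟨v, hv, i, hi, rfl, rfl, rfl⟩

theorem card_groupClients (S : Finset (ι → ℕ)) (g : ι) :
    #(groupClients S g) = ∑ v ∈ S, v g := by
  rw [groupClients, card_biUnion]
  · refine sum_congr rfl fun v _ => ?_
    rw [card_image_of_injective _ fun i j h => by simpa using h, card_range]
  · intro v _ w _ hvw
    simp only [disjoint_left, mem_image, mem_range]
    rintro c ⟨i, _, rfl⟩ ⟨j, _, h⟩
    exact hvw (congrArg Prod.fst h).symm

theorem filter_subset_groupClients {S : Finset (ι → ℕ)} {W : Finset ((ι → ℕ) × ι × ℕ)}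
    (hW : ∀ c ∈ W, c.1 ∈ S ∧ c.2.2 < c.1 c.2.1) (g : ι) :
    W.filter (fun c => c.2.1 = g) ⊆ groupClients S g := by
  intro c hc
  obtain ⟨hcW, rfl⟩ := mem_filter.1 hc
  exact mem_groupClients.2 ⟨(hW c hcW).1, rfl, (hW c hcW).2⟩

theorem groupClients_subset_filter_biUnion (S : Finset (ι → ℕ)) (g : ι) :
    groupClients S g ⊆ (univ.biUnion (groupClients S)).filter (fun c => c.2.1 = g) :=
  fun _ hc => mem_filter.2
    ⟨subset_biUnion_of_mem (groupClients S) (mem_univ g) hc, (mem_groupClients.1 hc).2.1⟩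

end Clients

/-- Reduction from kMSS≥ to facility location with fair outliers.  For each
vector `v ∈ V` there is a facility of opening cost `1`; for each group
`g : Fin d`, `v g` clients of group `g` (indexed by `i < v g`) are co-located
with that facility; distinct facilities are at distance `D > k`.  A client
`c = (v, g, i)` pays `0` if assigned to its co-located facility and `D`
otherwise.  There is a solution of total cost at most `k` serving at least
`T g` clients of every group `g` iff `(V, T, k)` is a yes-instance of
kMSS≥. -/
theorem flfo_iff_kmss_ge
    {d : ℕ} (V : Finset (Fin d → ℕ)) (T : Fin d → ℕ) (k : ℕ) (D : ℝ)
    (hD : (k : ℝ) < D) :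
    (∃ S ⊆ V, ∃ W : Finset ((Fin d → ℕ) × Fin d × ℕ),
      ∃ σ : (Fin d → ℕ) × Fin d × ℕ → (Fin d → ℕ),
      (∀ c ∈ W, c.1 ∈ V ∧ c.2.2 < c.1 c.2.1 ∧ σ c ∈ S) ∧
      (S.card : ℝ) + ∑ c ∈ W, (if c.1 = σ c then (0 : ℝ) else D) ≤ k ∧
      (∀ g, T g ≤ (W.filter (fun c => c.2.1 = g)).card)) ↔
    (∃ U ⊆ V, U.card ≤ k ∧ ∀ g, T g ≤ ∑ v ∈ U, v g) := by
  constructor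
  · rintro ⟨S, hSV, W, σ, hW, hcost, hcov⟩
    have hlocal : ∀ c ∈ W, c.1 = σ c := by
      have hcard : (0 : ℝ) ≤ S.card := S.card.cast_nonneg
      exact forall_of_sum_ite_zero_lt (D := D) (by linarith [k.cast_nonneg (α := ℝ)]) (by linarith)
    rw [sum_ite_of_true hlocal, sum_const_zero, add_zero] at hcost
    refine ⟨S, hSV, by exact_mod_cast hcost, fun g => (hcov g).trans ?_⟩
    rw [← card_groupClients]
    exact card_le_card <| filter_subset_groupClients
      (fun c hc => ⟨hlocal c hc ▸ (hW c hc).2.2, (hW c hc).2.1⟩) g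
  · rintro ⟨U, hUV, hcard, hcov⟩
    refine ⟨U, hUV, univ.biUnion (groupClients U), Prod.fst, fun c hc => ?_, by simpa, fun g => ?_⟩
    · obtain ⟨g, -, hc⟩ := mem_biUnion.1 hc
      obtain ⟨hcU, rfl, hlt⟩ := mem_groupClients.1 hc
      exact ⟨hUV hcU, hlt, hcU⟩
    · calc T g ≤ ∑ v ∈ U, v g := hcov g
        _ = #(groupClients U g) := (card_groupClients U g).symm
        _ ≤ _ := card_le_card (groupClients_subset_filter_biUnion U g)
end

section
/- Suppose an algorithm for facility location (without outliers) on client set C_r returns a solution of cost at most α·LP(C_r), where LP(C_r) is the optimal LP value on C_r, and suppose a fractional feasible solution of the outlier LP of cost OPT_LP yields, after removing clients with fractional outlier value ≥ 1-ε and rescaling, a feasible fractional facility location solution on C_r of cost at most OPT_LP/ε. Then combining the returned facility location solution with the removed outlier set yields a solution to facility location with fair outliers of cost at most (α/ε)·OPT_LP and with at most (1+2ε)·ℓ_g outliers in each group g, for any ε ∈ (0, 1/2]. -/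
/-!
Markov's inequality applied to the LP outlier values `z*` of a group `g` shows that at most
`ℓ_g / (1 - ε)` of its clients have `z*_j ≥ 1 - ε`, and `1 / (1 - ε) ≤ 1 + 2ε` for `ε ≤ 1/2`.
-/

open Finset

theorem Finset.card_filter_le_nsmul_le_sum {ι M : Type*} [AddCommMonoid M] [PartialOrder M]
    [IsOrderedAddMonoid M] (s : Finset ι) (f : ι → M) (t : M) [DecidablePred (t ≤ f ·)]
    (hf : ∀ j ∈ s, 0 ≤ f j) :
    #(s.filter (t ≤ f ·)) • t ≤ ∑ j ∈ s, f j :=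
  calc #(s.filter (t ≤ f ·)) • t ≤ ∑ j ∈ s.filter (t ≤ f ·), f j :=
        card_nsmul_le_sum _ _ _ fun _ hj => (mem_filter.1 hj).2
    _ ≤ ∑ j ∈ s, f j :=
        sum_le_sum_of_subset_of_nonneg (filter_subset _ _) fun j hj _ => hf j hj

theorem one_le_one_sub_mul_one_add_two_mul {ε : ℝ} (hε0 : 0 ≤ ε) (hε1 : ε ≤ 1 / 2) :
    1 ≤ (1 - ε) * (1 + 2 * ε) := by
  nlinarith

theorem card_filter_one_sub_le {ι : Type*} (s : Finset ι) (z : ι → ℝ) {ε ℓ : ℝ}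
    (hε0 : 0 ≤ ε) (hε1 : ε ≤ 1 / 2) (hz : ∀ j ∈ s, 0 ≤ z j) (hℓ : ∑ j ∈ s, z j ≤ ℓ) :
    (#(s.filter (1 - ε ≤ z ·)) : ℝ) ≤ (1 + 2 * ε) * ℓ := by
  set n : ℝ := (#(s.filter (1 - ε ≤ z ·)) : ℝ)
  have hmarkov : n * (1 - ε) ≤ ℓ := by
    simpa only [nsmul_eq_mul] using (s.card_filter_le_nsmul_le_sum z (1 - ε) hz).trans hℓ
  calc n ≤ n * ((1 - ε) * (1 + 2 * ε)) :=
        le_mul_of_one_le_right (Nat.cast_nonneg _) (one_le_one_sub_mul_one_add_two_mul hε0 hε1)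
    _ = (n * (1 - ε)) * (1 + 2 * ε) := by ring
    _ ≤ ℓ * (1 + 2 * ε) := by gcongr
    _ = (1 + 2 * ε) * ℓ := mul_comm _ _

theorem composed_bicriteria_guarantee_general
    {C : Type*} [Fintype C] (ω : ℕ) (grp : C → Fin ω) (ℓ : Fin ω → ℝ)
    (zstar : C → ℝ) (ε α OPTLP LPCr A : ℝ)
    (hε0 : 0 < ε) (hε1 : ε ≤ 1/2) (hα : 0 < α)
    (hz : ∀ j, 0 ≤ zstar j ∧ zstar j ≤ 1)
    (hgrp : ∀ g, ∑ j ∈ Finset.univ.filter (fun j => grp j = g), zstar j ≤ ℓ g)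
    (hLPCr : LPCr ≤ OPTLP / ε)
    (hA : A ≤ α * LPCr) :
    A ≤ (α / ε) * OPTLP ∧
    ∀ g, ((Finset.univ.filter
        (fun j => grp j = g ∧ 1 - ε ≤ zstar j)).card : ℝ) ≤
      (1 + 2 * ε) * ℓ g := by
  refine ⟨?_, fun g => ?_⟩
  · calc A ≤ α * LPCr := hA
      _ ≤ α * (OPTLP / ε) := by gcongr
      _ = (α / ε) * OPTLP := by ring
  · rw [← filter_filter]
    exact card_filter_one_sub_le _ zstar hε0.le hε1 (fun j _ => (hz j).1) (hgrp g)

/-- Composing an `α`-approximate facility location algorithm on the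
non-outlier clients `C_r` with the LP-based outlier-removal step yields an
`(α/ε)`-approximation for facility location with fair outliers that violates
each group's outlier budget by at most a factor `(1 + 2ε)`. -/
theorem composed_bicriteria_guarantee
    {C : Type*} [Fintype C] (ω : ℕ) (grp : C → Fin ω) (ℓ : Fin ω → ℝ)
    (zstar : C → ℝ) (ε α OPTLP LPCr A : ℝ)
    (hε0 : 0 < ε) (hε1 : ε ≤ 1/2) (hα : 0 < α)
    (hOPT : 0 ≤ OPTLP)
    (hz : ∀ j, 0 ≤ zstar j ∧ zstar j ≤ 1)
    (hgrp : ∀ g, ∑ j ∈ Finset.univ.filter (fun j => grp j = g), zstar j ≤ ℓ g)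
    (hLPCr : LPCr ≤ OPTLP / ε)
    (hA : A ≤ α * LPCr) :
    A ≤ (α / ε) * OPTLP ∧
    ∀ g, ((Finset.univ.filter
        (fun j => grp j = g ∧ 1 - ε ≤ zstar j)).card : ℝ) ≤
      (1 + 2 * ε) * ℓ g :=
  composed_bicriteria_guarantee_general ω grp ℓ zstar ε α OPTLP LPCr A hε0 hε1 hα hz hgrp hLPCr hA
end
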